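/- Define for nonnegative integer g and a multi-index n = (n_{a,b})_{0<a<p,0<b<q} of nonnegative integers the Verlinde number d(g, n) = (1/4)^{g−1} (1/2)^{|n|} Σ_{0<i<p,0<j<q} (pq/(4 sin²(iπ/p) sin²(jπ/q)))^{g−1} Π_{a,b} ((sin(iaπ/p) sin(jbπ/q))/(sin(iπ/p) sin(jπ/q)))^{n_{a,b}}. Then the fusion rule Σ_{0<a<p, 0<b<q} d(g, n + 2ℓ_{a,b}) = d(g+1, n) holds, where ℓ_{a,b} is the multi-index with a single 1 in position (a,b). -/

import Mathlib

open Real Finset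

/-- The Verlinde number `d(g, n)` of the `(p,q)`-torus knot exterior, where the
multi-index `n : ℕ → ℕ → ℕ` records the multiplicities `n a b` for `0 < a < p`,
`0 < b < q`. -/
noncomputable def verlinde (p q : ℕ) (g : ℕ) (n : ℕ → ℕ → ℕ) : ℝ :=
  (1 / 4 : ℝ) ^ ((g : ℤ) - 1) *
    (1 / 2 : ℝ) ^ (∑ a ∈ Ioo 0 p, ∑ b ∈ Ioo 0 q, n a b) *
    ∑ i ∈ Ioo 0 p, ∑ j ∈ Ioo 0 q,
      ((p * q : ℝ) / (4 * Real.sin (i * π / p) ^ 2 * Real.sin (j * π / q) ^ 2))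
          ^ ((g : ℤ) - 1) *
        ∏ a ∈ Ioo 0 p, ∏ b ∈ Ioo 0 q,
          (Real.sin (i * a * π / p) * Real.sin (j * b * π / q) /
            (Real.sin (i * π / p) * Real.sin (j * π / q))) ^ (n a b)

/-- The elementary multi-index `ℓ_{a,b}`. -/
def ell (a b : ℕ) : ℕ → ℕ → ℕ := fun x y => if x = a ∧ y = b then 1 else 0

section Aux

private lemma sum_cos_aux (p i : ℕ) (h0 : 0 < i) (h1 : i < p) :
    ∑ a ∈ range p, Real.cos (2 * ((i : ℝ) * a * π / p)) = 0 := by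
  have hπ := Real.pi_pos
  have hp : (0:ℝ) < p := by exact_mod_cast h0.trans h1
  set θ : ℝ := 2 * π * i / p with hθ
  have hz : ∀ a : ℕ, Complex.exp (θ * Complex.I) ^ a
      = Complex.exp ((a * θ : ℝ) * Complex.I) := by
    intro a
    rw [← Complex.exp_nat_mul]
    push_cast
    ring_nf
  have hne : Complex.exp (θ * Complex.I) ≠ 1 := by
    rw [Ne, Complex.exp_eq_one_iff]
    rintro ⟨m, hm⟩
    have : (θ : ℂ) = (m : ℂ) * (2 * π) := by
      rw [show ((m:ℂ) * (2 * ↑π * Complex.I)) = ((m:ℂ) * (2 * ↑π)) * Complex.I by ring] at hm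
      exact mul_right_cancel₀ Complex.I_ne_zero hm
    have hθm : θ = m * (2 * π) := by exact_mod_cast this
    have : (i : ℝ) = m * p := by
      rw [hθ] at hθm; field_simp at hθm
      nlinarith [hθm]
    have him : (i : ℤ) = m * p := by exact_mod_cast this
    have h0' : 0 < (i:ℤ) := by exact_mod_cast h0
    have h1' : (i:ℤ) < p := by exact_mod_cast h1
    rcases lt_trichotomy m 0 with h | h | h
    · nlinarith
    · simp [h] at him; omega
    · nlinarith
  have hpow : Complex.exp (θ * Complex.I) ^ p = 1 := by
    rw [hz p]
    have hpθ : ((p : ℝ) * θ : ℝ) = (i : ℝ) * (2 * π) := by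
      rw [hθ]; field_simp
    rw [hpθ]
    have := Complex.exp_nat_mul_two_pi_mul_I i
    rw [← this]
    push_cast
    ring_nf
  have hsum : ∑ a ∈ range p, Complex.exp (θ * Complex.I) ^ a = 0 := by
    rw [geom_sum_eq hne, hpow]; simp
  have hre := congrArg Complex.re hsum
  rw [Complex.re_sum, Complex.zero_re] at hre
  rw [← hre]
  apply Finset.sum_congr rfl
  intro a _
  rw [hz a, Complex.exp_ofReal_mul_I_re]
  congr 1
  rw [hθ]; field_simp

private lemma sum_sin_sq (p i : ℕ) (h0 : 0 < i) (h1 : i < p) :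
    ∑ a ∈ Ioo 0 p, Real.sin ((i : ℝ) * a * π / p) ^ 2 = p / 2 := by
  have hioo : Ioo 0 p = (range p).erase 0 := by
    ext x; simp [Finset.mem_Ioo, Finset.mem_erase, Finset.mem_range]; omega
  rw [hioo, Finset.sum_erase _ (by simp)]
  simp only [Real.sin_sq_eq_half_sub]
  rw [Finset.sum_sub_distrib, Finset.sum_const, ← Finset.sum_div, sum_cos_aux p i h0 h1]
  simp [Finset.card_range]
  ring

private noncomputable def Rterm (p q i j x y : ℕ) : ℝ :=
  Real.sin (i * x * π / p) * Real.sin (j * y * π / q) /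
    (Real.sin (i * π / p) * Real.sin (j * π / q))

private noncomputable def Cterm (p q i j : ℕ) : ℝ :=
  (p * q : ℝ) / (4 * Real.sin (i * π / p) ^ 2 * Real.sin (j * π / q) ^ 2)

private noncomputable def Pterm (p q : ℕ) (n : ℕ → ℕ → ℕ) (i j : ℕ) : ℝ :=
  ∏ a ∈ Ioo 0 p, ∏ b ∈ Ioo 0 q, Rterm p q i j a b ^ n a b

private lemma verlinde_eq (p q g : ℕ) (n : ℕ → ℕ → ℕ) :
    verlinde p q g n = (1 / 4 : ℝ) ^ ((g : ℤ) - 1) *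
      (1 / 2 : ℝ) ^ (∑ a ∈ Ioo 0 p, ∑ b ∈ Ioo 0 q, n a b) *
      ∑ i ∈ Ioo 0 p, ∑ j ∈ Ioo 0 q,
        Cterm p q i j ^ ((g : ℤ) - 1) * Pterm p q n i j := rfl

private lemma sum_ell {p q a b : ℕ} (ha : a ∈ Ioo 0 p) (hb : b ∈ Ioo 0 q) :
    ∑ x ∈ Ioo 0 p, ∑ y ∈ Ioo 0 q, 2 * ell a b x y = 2 := by
  rw [Finset.sum_eq_single a]
  · rw [Finset.sum_eq_single b]
    · simp [ell]
    · intro y _ hy; simp [ell, hy]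
    · intro h; exact absurd hb h
  · intro x _ hx
    apply Finset.sum_eq_zero; intro y _; simp [ell, hx]
  · intro h; exact absurd ha h

private lemma prod_ell {p q a b : ℕ} (ha : a ∈ Ioo 0 p) (hb : b ∈ Ioo 0 q)
    (f : ℕ → ℕ → ℝ) :
    ∏ x ∈ Ioo 0 p, ∏ y ∈ Ioo 0 q, f x y ^ (2 * ell a b x y) = f a b ^ 2 := by
  rw [Finset.prod_eq_single a]
  · rw [Finset.prod_eq_single b]
    · simp [ell]
    · intro y _ hy; simp [ell, hy]
    · intro h; exact absurd hb h
  · intro x _ hx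
    apply Finset.prod_eq_one; intro y _; simp [ell, hx]
  · intro h; exact absurd ha h

private lemma Nsum_add_ell {p q a b : ℕ} (ha : a ∈ Ioo 0 p) (hb : b ∈ Ioo 0 q)
    (n : ℕ → ℕ → ℕ) :
    ∑ x ∈ Ioo 0 p, ∑ y ∈ Ioo 0 q, (n x y + 2 * ell a b x y)
      = (∑ x ∈ Ioo 0 p, ∑ y ∈ Ioo 0 q, n x y) + 2 := by
  simp only [Finset.sum_add_distrib]
  rw [sum_ell ha hb]

private lemma Pterm_add_ell {p q a b : ℕ} (ha : a ∈ Ioo 0 p) (hb : b ∈ Ioo 0 q)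
    (n : ℕ → ℕ → ℕ) (i j : ℕ) :
    Pterm p q (fun x y => n x y + 2 * ell a b x y) i j
      = Pterm p q n i j * Rterm p q i j a b ^ 2 := by
  unfold Pterm
  simp only [pow_add, Finset.prod_mul_distrib]
  rw [prod_ell ha hb]

private lemma sum_swap4 {α : Type*} [AddCommMonoid α] (s t u v : Finset ℕ)
    (f : ℕ → ℕ → ℕ → ℕ → α) :
    ∑ a ∈ s, ∑ b ∈ t, ∑ i ∈ u, ∑ j ∈ v, f a b i j
      = ∑ i ∈ u, ∑ j ∈ v, ∑ a ∈ s, ∑ b ∈ t, f a b i j := by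
  have h1 : ∀ a, ∑ b ∈ t, ∑ i ∈ u, ∑ j ∈ v, f a b i j
      = ∑ i ∈ u, ∑ j ∈ v, ∑ b ∈ t, f a b i j := by
    intro a
    rw [Finset.sum_comm]
    exact Finset.sum_congr rfl fun i _ => Finset.sum_comm
  simp only [h1]
  rw [Finset.sum_comm]
  exact Finset.sum_congr rfl fun i _ => Finset.sum_comm

private lemma sin_pos_aux {k i : ℕ} (hi : i ∈ Ioo 0 k) :
    0 < Real.sin ((i:ℝ) * π / k) := by
  have hπ := Real.pi_pos
  rw [Finset.mem_Ioo] at hi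
  have hk : (0:ℝ) < k := by exact_mod_cast hi.1.trans hi.2
  have hi0 : (0:ℝ) < i := by exact_mod_cast hi.1
  have hik : (i:ℝ) < k := by exact_mod_cast hi.2
  apply Real.sin_pos_of_pos_of_lt_pi
  · positivity
  · rw [div_lt_iff₀ hk]; nlinarith

private lemma sum_R_sq {p q i j : ℕ} (hi : i ∈ Ioo 0 p) (hj : j ∈ Ioo 0 q) :
    ∑ a ∈ Ioo 0 p, ∑ b ∈ Ioo 0 q, Rterm p q i j a b ^ 2 = Cterm p q i j := by
  have hs := (sin_pos_aux hi).ne'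
  have ht := (sin_pos_aux hj).ne'
  rw [Finset.mem_Ioo] at hi hj
  have h1 : ∀ a b : ℕ, Rterm p q i j a b ^ 2
      = Real.sin ((i:ℝ) * a * π / p) ^ 2 * Real.sin ((j:ℝ) * b * π / q) ^ 2
        * (Real.sin ((i:ℝ) * π / p) ^ 2 * Real.sin ((j:ℝ) * π / q) ^ 2)⁻¹ := by
    intro a b
    unfold Rterm
    rw [div_pow, mul_pow, mul_pow, div_eq_mul_inv]
  simp only [h1]
  simp only [← Finset.sum_mul, ← Finset.mul_sum]
  rw [sum_sin_sq p i hi.1 hi.2, sum_sin_sq q j hj.1 hj.2]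
  unfold Cterm
  have hp : (0:ℝ) < p := by exact_mod_cast hi.1.trans hi.2
  have hq : (0:ℝ) < q := by exact_mod_cast hj.1.trans hj.2
  field_simp
  ring

private lemma Cterm_ne_zero {p q i j : ℕ} (hi : i ∈ Ioo 0 p) (hj : j ∈ Ioo 0 q) :
    Cterm p q i j ≠ 0 := by
  have hs := sin_pos_aux hi
  have ht := sin_pos_aux hj
  rw [Finset.mem_Ioo] at hi hj
  have hp : (0:ℝ) < p := by exact_mod_cast hi.1.trans hi.2
  have hq : (0:ℝ) < q := by exact_mod_cast hj.1.trans hj.2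
  unfold Cterm
  positivity

end Aux

theorem fusion_rule_I (p q : ℕ) (hp : 0 < p) (hq : 0 < q)
    (hpq : Nat.Coprime p q) (g : ℕ) (n : ℕ → ℕ → ℕ) :
    ∑ a ∈ Ioo 0 p, ∑ b ∈ Ioo 0 q,
        verlinde p q g (fun x y => n x y + 2 * ell a b x y)
      = verlinde p q (g + 1) n := by
  have hterm : ∀ a ∈ Ioo 0 p, ∀ b ∈ Ioo 0 q,
      verlinde p q g (fun x y => n x y + 2 * ell a b x y)
        = (1 / 4 : ℝ) ^ ((g : ℤ) - 1) *
            (1 / 2 : ℝ) ^ ((∑ x ∈ Ioo 0 p, ∑ y ∈ Ioo 0 q, n x y) + 2) *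
            ∑ i ∈ Ioo 0 p, ∑ j ∈ Ioo 0 q,
              Cterm p q i j ^ ((g : ℤ) - 1) *
                (Pterm p q n i j * Rterm p q i j a b ^ 2) := by
    intro a ha b hb
    rw [verlinde_eq, Nsum_add_ell ha hb]
    congr 1
    refine Finset.sum_congr rfl fun i _ => Finset.sum_congr rfl fun j _ => ?_
    rw [Pterm_add_ell ha hb]
  rw [Finset.sum_congr rfl fun a ha => Finset.sum_congr rfl fun b hb => hterm a ha b hb]
  simp only [← Finset.mul_sum]
  rw [sum_swap4]
  have hinner : ∀ i ∈ Ioo 0 p, ∀ j ∈ Ioo 0 q,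
      ∑ a ∈ Ioo 0 p, ∑ b ∈ Ioo 0 q,
          Cterm p q i j ^ ((g : ℤ) - 1) * (Pterm p q n i j * Rterm p q i j a b ^ 2)
        = Cterm p q i j ^ (((g + 1 : ℕ) : ℤ) - 1) * Pterm p q n i j := by
    intro i hi j hj
    have hC := Cterm_ne_zero hi hj
    simp only [← Finset.mul_sum]
    rw [sum_R_sq hi hj]
    have hg : (((g + 1 : ℕ) : ℤ)) - 1 = ((g : ℤ) - 1) + 1 := by push_cast; ring
    rw [hg, zpow_add_one₀ hC]
    ring
  rw [Finset.sum_congr rfl fun i hi => Finset.sum_congr rfl fun j hj => hinner i hi j hj]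
  rw [verlinde_eq]
  congr 1
  have hg : (((g + 1 : ℕ) : ℤ)) - 1 = ((g : ℤ) - 1) + 1 := by push_cast; ring
  rw [pow_add, hg, zpow_add_one₀ (by norm_num : (1/4:ℝ) ≠ 0)]
  norm_num
  ring
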